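/- arXiv:1704.08205 — 5 statements merged into one kernel-verified Lean document; each statement's English description precedes it below -/
import Mathlib

section
/- For Demazure operators on ℤ[x_1,…,x_n], the braid relation ∂_i ∂_{i+1} ∂_i = ∂_{i+1} ∂_i ∂_{i+1} holds, and ∂_i ∂_j = ∂_j ∂_i whenever |i − j| > 1. -/
/-!
The defining identity `(x_a - x_b) · ∂_{ab} f = f - s_{ab} f` determines `∂_{ab} f`, because
`x_a - x_b` is a non-zero-divisor; in particular `∂_{ab} f` is `s_{ab}`-invariant. Pushing the
identities through the transpositions shows that
`(x_a - x_b)(x_b - x_c)(x_a - x_c) · ∂_{ab}∂_{bc}∂_{ab} f` is the alternating sum of `w f` over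
the six elements `w` of the group generated by `s = s_{ab}` and `t = s_{bc}`. Since
`s t s = t s t`, this sum, and hence `∂_{ab}∂_{bc}∂_{ab} f`, is symmetric in the two operators.
For disjoint pairs, `(x_a - x_b)(x_c - x_d) · ∂_{ab}∂_{cd} f = (1 - s_{ab})(1 - s_{cd}) f`, and
the two transpositions commute.
-/

open MvPolynomial

/-- The simple transposition `s_i` acting on `ℤ[x_1,…,x_n]` by swapping `x_i` and `x_{i+1}`
(0-based indices `i`, `i+1`). -/
noncomputable def sSwap (n i : ℕ) (h : i + 1 < n) :
    MvPolynomial (Fin n) ℤ → MvPolynomial (Fin n) ℤ :=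
  fun f => rename ⇑(Equiv.swap (⟨i, Nat.lt_of_succ_lt h⟩ : Fin n) ⟨i + 1, h⟩) f

/-- `D` is the Demazure operator `∂_i`, characterized by
`(x_i − x_{i+1}) · D f = f − s_i f` for all `f`. -/
def IsDemazure (n i : ℕ) (h : i + 1 < n)
    (D : MvPolynomial (Fin n) ℤ → MvPolynomial (Fin n) ℤ) : Prop :=
  ∀ f, (X (⟨i, Nat.lt_of_succ_lt h⟩ : Fin n) - X ⟨i + 1, h⟩) * D f = f - sSwap n i h f

namespace Equiv

variable {α : Type*} [DecidableEq α] {a b c d : α}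

theorem swap_braid (hab : a ≠ b) (hac : a ≠ c) (hbc : b ≠ c) :
    swap a b * swap b c * swap a b = swap b c * swap a b * swap b c := by
  rw [swap_mul_swap_mul_swap hab hac, swap_comm a b, swap_comm b c,
    swap_mul_swap_mul_swap hbc.symm hac.symm, swap_comm]

theorem swap_mul_swap_comm (hac : a ≠ c) (had : a ≠ d) (hbc : b ≠ c) (hbd : b ≠ d) :
    swap a b * swap c d = swap c d * swap a b := by
  rw [mul_swap_eq_swap_mul, swap_apply_of_ne_of_ne hac.symm hbc.symm,
    swap_apply_of_ne_of_ne had.symm hbd.symm]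

end Equiv

namespace MvPolynomial

open Equiv

variable {σ R : Type*} [CommRing R] {a b c d : σ}

theorem rename_perm_rename_perm (π τ : Perm σ) (p : MvPolynomial σ R) :
    rename π (rename τ p) = rename ⇑(π * τ) p := by
  rw [rename_rename, Perm.coe_mul]

theorem X_sub_X_ne_zero [Nontrivial R] (hab : a ≠ b) : (X a - X b : MvPolynomial σ R) ≠ 0 :=
  sub_ne_zero.2 fun h => hab (X_injective h)

variable [DecidableEq σ]

theorem rename_swap_rename_swap (a b : σ) (p : MvPolynomial σ R) :
    rename (swap a b) (rename (swap a b) p) = p := by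
  rw [rename_perm_rename_perm, swap_mul_self, Perm.coe_one, rename_id, AlgHom.id_apply]

def IsDivDiff (a b : σ) (D : MvPolynomial σ R → MvPolynomial σ R) : Prop :=
  ∀ f, (X a - X b) * D f = f - rename (swap a b) f

namespace IsDivDiff

variable {D E : MvPolynomial σ R → MvPolynomial σ R}

theorem symm (hD : IsDivDiff a b D) : IsDivDiff b a (fun f => -D f) := fun f => by
  rw [swap_comm]
  linear_combination hD f

theorem mul_apply_apply_of_ne (hD : IsDivDiff a b D) (hE : IsDivDiff c d E)
    (hac : a ≠ c) (had : a ≠ d) (hbc : b ≠ c) (hbd : b ≠ d) (f : MvPolynomial σ R) :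
    (X a - X b) * (X c - X d) * D (E f) =
      f - rename (swap a b) f - rename (swap c d) f + rename (swap a b) (rename (swap c d) f) := by
  have hsE := congrArg (rename (swap a b)) (hE f)
  simp only [map_mul, map_sub, rename_X, swap_apply_of_ne_of_ne hac.symm hbc.symm,
    swap_apply_of_ne_of_ne had.symm hbd.symm] at hsE
  linear_combination (X c - X d) * hD (E f) + hE f - hsE

variable [IsDomain R]

theorem rename_swap_apply (hD : IsDivDiff a b D) (hab : a ≠ b) (f : MvPolynomial σ R) :
    rename (swap a b) (D f) = D f := by
  have h := congrArg (rename (swap a b)) (hD f)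
  simp only [map_mul, map_sub, rename_X, swap_apply_left, swap_apply_right,
    rename_swap_rename_swap] at h
  apply mul_left_cancel₀ (X_sub_X_ne_zero (R := R) hab)
  linear_combination -h - hD f

theorem apply_neg (hD : IsDivDiff a b D) (hab : a ≠ b) (f : MvPolynomial σ R) :
    D (-f) = -D f := by
  apply mul_left_cancel₀ (X_sub_X_ne_zero (R := R) hab)
  have h := hD (-f)
  rw [map_neg] at h
  linear_combination h + hD f

theorem comm_of_ne (hD : IsDivDiff a b D) (hE : IsDivDiff c d E) (hab : a ≠ b) (hcd : c ≠ d)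
    (hac : a ≠ c) (had : a ≠ d) (hbc : b ≠ c) (hbd : b ≠ d) (f : MvPolynomial σ R) :
    D (E f) = E (D f) := by
  have hDE := hD.mul_apply_apply_of_ne hE hac had hbc hbd f
  have hED := hE.mul_apply_apply_of_ne hD hac.symm hbc.symm had.symm hbd.symm f
  have hsu :
      rename (swap a b) (rename (swap c d) f) = rename (swap c d) (rename (swap a b) f) := by
    rw [rename_perm_rename_perm, rename_perm_rename_perm, swap_mul_swap_comm hac had hbc hbd]
  apply mul_left_cancel₀ (mul_ne_zero (X_sub_X_ne_zero (R := R) hab) (X_sub_X_ne_zero hcd))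
  linear_combination hDE - hED + hsu

theorem mul_apply_apply_apply (hD : IsDivDiff a b D) (hE : IsDivDiff b c E)
    (hab : a ≠ b) (hac : a ≠ c) (hbc : b ≠ c) (f : MvPolynomial σ R) :
    (X a - X b) * (X b - X c) * (X a - X c) * D (E (D f)) =
      f - rename (swap a b) f - rename (swap b c) f
        + rename (swap a b) (rename (swap b c) f) + rename (swap b c) (rename (swap a b) f)
        - rename (swap a b) (rename (swap b c) (rename (swap a b) f)) := by
  -- with `g = ∂_{ab} f`, the `s`-invariance of `g` turns
  -- `(x_a - x_c) g - (x_b - x_c) s g` into `f - s f`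
  have hsD := hD.rename_swap_apply hab f
  have htD := congrArg (rename (swap b c)) (hD f)
  simp only [map_mul, map_sub, rename_X, swap_apply_left,
    swap_apply_of_ne_of_ne hab hac] at htD
  have hsED := congrArg (rename (swap a b)) (hE (D f))
  simp only [map_mul, map_sub, rename_X, swap_apply_right,
    swap_apply_of_ne_of_ne hac.symm hbc.symm] at hsED
  have hstD := congrArg (rename (swap a b)) htD
  simp only [map_mul, map_sub, rename_X, swap_apply_left,
    swap_apply_of_ne_of_ne hac.symm hbc.symm] at hstD
  linear_combination (X b - X c) * (X a - X c) * hD (E (D f)) + (X a - X c) * hE (D f)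
    - (X b - X c) * hsED + hD f - htD + hstD - (X b - X c) * hsD

theorem braid (hD : IsDivDiff a b D) (hE : IsDivDiff b c E)
    (hab : a ≠ b) (hac : a ≠ c) (hbc : b ≠ c) (f : MvPolynomial σ R) :
    D (E (D f)) = E (D (E f)) := by
  have hDED := hD.mul_apply_apply_apply hE hab hac hbc f
  -- `∂_{bc}∂_{ab}∂_{bc}` is the same formula for the reversed pairs `(c, b)`, `(b, a)`,
  -- whose operators are `-E` and `-D`.
  have hEDE := hE.symm.mul_apply_apply_apply hD.symm hbc.symm hac.symm hab.symm f
  simp only [hD.apply_neg hab, neg_neg, swap_comm c b, swap_comm b a] at hEDE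
  have hsts : rename (swap a b) (rename (swap b c) (rename (swap a b) f)) =
      rename (swap b c) (rename (swap a b) (rename (swap b c) f)) := by
    simp only [rename_perm_rename_perm, ← mul_assoc, swap_braid hab hac hbc]
  apply mul_left_cancel₀ (mul_ne_zero (mul_ne_zero (X_sub_X_ne_zero (R := R) hab)
    (X_sub_X_ne_zero hbc)) (X_sub_X_ne_zero hac))
  linear_combination hDED - hEDE - hsts

end IsDivDiff

end MvPolynomial

theorem IsDemazure.isDivDiff {n i : ℕ} {h : i + 1 < n}
    {D : MvPolynomial (Fin n) ℤ → MvPolynomial (Fin n) ℤ} (hD : IsDemazure n i h D) :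
    IsDivDiff ⟨i, Nat.lt_of_succ_lt h⟩ ⟨i + 1, h⟩ D :=
  hD

/-- Braid relation `∂_i ∂_{i+1} ∂_i = ∂_{i+1} ∂_i ∂_{i+1}` and distant commutation
`∂_i ∂_j = ∂_j ∂_i` for `|i − j| > 1`. -/
theorem demazure_braid_and_distant (n : ℕ) :
    (∀ (i : ℕ) (h : i + 2 < n)
      (Di Dii : MvPolynomial (Fin n) ℤ → MvPolynomial (Fin n) ℤ),
      IsDemazure n i (Nat.lt_of_succ_lt h) Di → IsDemazure n (i + 1) h Dii →
      ∀ f, Di (Dii (Di f)) = Dii (Di (Dii f))) ∧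
    (∀ (i j : ℕ) (hi : i + 1 < n) (hj : j + 1 < n), i + 1 < j →
      ∀ (Di Dj : MvPolynomial (Fin n) ℤ → MvPolynomial (Fin n) ℤ),
      IsDemazure n i hi Di → IsDemazure n j hj Dj →
      ∀ f, Di (Dj f) = Dj (Di f)) := by
  constructor
  · intro i h Di Dii hDi hDii f
    refine hDi.isDivDiff.braid hDii.isDivDiff ?_ ?_ ?_ f <;>
      simp only [ne_eq, Fin.mk.injEq] <;> omega
  · intro i j hi hj hij Di Dj hDi hDj f
    refine hDi.isDivDiff.comm_of_ne hDj.isDivDiff ?_ ?_ ?_ ?_ ?_ ?_ f <;>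
      simp only [ne_eq, Fin.mk.injEq] <;> omega
end

section
/- Define elements ω_k^a recursively in ℤ[x_1,…,x_n] ⊗ Λ(ω_1,…,ω_n) by ω_k^0 = ω_k, ω_0 = 0, and ω_k^a = ω_{k−1}^{a−1} − x_k ω_k^{a−1}. Then ω_k^a = Σ_{ℓ=1}^{k} (−1)^{a+k+ℓ} h_{a+ℓ−k}(x_ℓ,…,x_k) ω_ℓ, where h_j(x_ℓ,…,x_k) is the j-th complete homogeneous symmetric polynomial in the variables x_ℓ,…,x_k (with h_j = 0 for j < 0). -/
/-!
Both sides satisfy the recursion defining `ω_k^a`. For the right-hand side this is the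
Pascal-type identity `h_{d+1}(x_j,…,x_{k+1}) = h_{d+1}(x_j,…,x_k) + x_{k+1} h_d(x_j,…,x_{k+1})`,
obtained by splitting the monomials according to whether they contain `x_{k+1}`.
-/

open MvPolynomial

/-- Complete homogeneous symmetric polynomial of degree `d` in the variables `x_i`, `i ∈ s`. -/
noncomputable def hpoly (s : Finset ℕ) (d : ℕ) : MvPolynomial ℕ ℤ :=
  ∑ m ∈ s.sym d, (m.1.map X).prod

/-- The elements `ω_k^a` of the free `ℤ[x_1,x_2,…]`-module with basis `ω_1, ω_2, …`
(coordinates indexed by `ℕ`, 1-based; `ω_0 = 0`), defined by the recursion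
`ω_k^0 = ω_k`, `ω_k^a = ω_{k−1}^{a−1} − x_k·ω_k^{a−1}`. -/
noncomputable def Omega : ℕ → ℕ → ℕ → MvPolynomial ℕ ℤ
  | 0, _ => 0
  | k + 1, 0 => fun j => if j = k + 1 then 1 else 0
  | k + 1, a + 1 => fun j => Omega k a j - X (k + 1) * Omega (k + 1) a j
  termination_by k a => (a, k)

namespace Finset

variable {α : Type*} [DecidableEq α] {a : α} {t : Finset α} {n : ℕ}

theorem filter_mem_sym_succ (ha : a ∈ t) :
    (t.sym (n + 1)).filter (a ∈ ·) = (t.sym n).image (Sym.cons a) := by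
  ext m
  simp only [mem_filter, mem_image, mem_sym_iff]
  constructor
  · rintro ⟨hm, ham⟩
    refine ⟨m.erase a ham, fun b hb => hm b ?_, Sym.cons_erase ham⟩
    rw [← Sym.cons_erase ham]
    exact Sym.mem_cons_of_mem hb
  · rintro ⟨m', hm', rfl⟩
    refine ⟨fun b hb => ?_, Sym.mem_cons_self _ _⟩
    rcases Sym.mem_cons.1 hb with rfl | hb
    exacts [ha, hm' b hb]

theorem filter_notMem_sym :
    (t.sym n).filter (a ∉ ·) = (t.erase a).sym n := by
  ext m
  simp only [mem_filter, mem_sym_iff, mem_erase]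
  grind

end Finset

theorem hpoly_zero (s : Finset ℕ) : hpoly s 0 = 1 := by
  simp only [hpoly, Finset.sym_zero, Finset.sum_singleton]
  rfl

theorem hpoly_insert {a : ℕ} {s : Finset ℕ} (ha : a ∉ s) (d : ℕ) :
    hpoly (insert a s) (d + 1) = hpoly s (d + 1) + X a * hpoly (insert a s) d := by
  classical
  rw [hpoly, ← Finset.sum_filter_not_add_sum_filter _ (a ∈ ·), Finset.filter_notMem_sym,
    Finset.erase_insert ha, Finset.filter_mem_sym_succ (Finset.mem_insert_self a s),
    Finset.sum_image fun m _ m' _ h => (Sym.cons_inj_right a m m').1 h, hpoly, hpoly,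
    Finset.mul_sum]
  simp [Sym.coe_cons]

theorem hpoly_Icc_succ_right {j k : ℕ} (hj : j ≤ k + 1) (d : ℕ) :
    hpoly (Finset.Icc j (k + 1)) (d + 1) =
      hpoly (Finset.Icc j k) (d + 1) + X (k + 1) * hpoly (Finset.Icc j (k + 1)) d := by
  rw [← Finset.insert_Icc_right_eq_Icc_add_one hj, hpoly_insert (by simp)]

theorem hpoly_empty_succ (d : ℕ) : hpoly ∅ (d + 1) = 0 := by
  simp [hpoly]

noncomputable def omegaCoeff (k a j : ℕ) : MvPolynomial ℕ ℤ :=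
  if 1 ≤ j ∧ j ≤ k ∧ k ≤ a + j then (-1) ^ (a + k + j) * hpoly (Finset.Icc j k) (a + j - k)
  else 0

theorem omegaCoeff_zero_left (a : ℕ) : omegaCoeff 0 a = 0 := by
  funext j
  simp [omegaCoeff]
  omega

theorem omegaCoeff_succ_zero (k : ℕ) :
    omegaCoeff (k + 1) 0 = fun j => if j = k + 1 then 1 else 0 := by
  funext j
  by_cases hj : j = k + 1
  · subst hj
    simp [omegaCoeff, hpoly_zero, ← two_mul, pow_mul]
  · simp only [omegaCoeff, hj, if_false]
    exact if_neg (by omega)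

theorem omegaCoeff_of_one_le {j : ℕ} (hj : 1 ≤ j) (k a : ℕ) :
    omegaCoeff k a j =
      if k ≤ a + j then (-1) ^ (a + k + j) * hpoly (Finset.Icc j k) (a + j - k) else 0 := by
  rcases le_or_gt j k with hjk | hkj
  · simp [omegaCoeff, hj, hjk]
  · obtain ⟨d, hd⟩ : ∃ d, a + j - k = d + 1 := ⟨a + j - k - 1, by omega⟩
    simp [omegaCoeff, hd, Finset.Icc_eq_empty_of_lt hkj, hpoly_empty_succ, Nat.not_le.2 hkj]

theorem omegaCoeff_succ_succ (k a j : ℕ) :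
    omegaCoeff (k + 1) (a + 1) j = omegaCoeff k a j - X (k + 1) * omegaCoeff (k + 1) a j := by
  rcases Nat.eq_zero_or_pos j with rfl | hj
  · simp [omegaCoeff]
  rcases le_or_gt j (k + 1) with hjk | hkj
  · simp only [omegaCoeff_of_one_le hj]
    rcases lt_trichotomy (a + j) k with hlt | heq | hgt
    · simp [show ¬ k ≤ a + j by omega, show ¬ k + 1 ≤ a + 1 + j by omega,
        show ¬ k + 1 ≤ a + j by omega]
    · simp only [show k ≤ a + j by omega, show k + 1 ≤ a + 1 + j by omega,
        show ¬ k + 1 ≤ a + j by omega, if_true, if_false, show a + 1 + j - (k + 1) = 0 by omega,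
        show a + j - k = 0 by omega, hpoly_zero]
      ring
    · obtain ⟨d, hd⟩ := Nat.exists_eq_add_of_lt hgt
      simp only [show k ≤ a + j by omega, show k + 1 ≤ a + 1 + j by omega,
        show k + 1 ≤ a + j by omega, if_true, show a + 1 + j - (k + 1) = d + 1 by omega,
        show a + j - k = d + 1 by omega, show a + j - (k + 1) = d by omega,
        hpoly_Icc_succ_right hjk]
      ring
  · simp [omegaCoeff, show ¬ j ≤ k + 1 by omega, show ¬ j ≤ k by omega]

theorem omega_expansion_general (k a : ℕ) :
    Omega k a = fun j =>
      if 1 ≤ j ∧ j ≤ k ∧ k ≤ a + j then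
        (-1 : MvPolynomial ℕ ℤ) ^ (a + k + j) * hpoly (Finset.Icc j k) (a + j - k)
      else 0 := by
  change Omega k a = omegaCoeff k a
  induction k, a using Omega.induct with
  | case1 a => rw [Omega, omegaCoeff_zero_left]
  | case2 k => rw [Omega, omegaCoeff_succ_zero]
  | case3 k a ih ih' =>
    funext j
    rw [Omega, omegaCoeff_succ_succ, ih, ih']

/-- `ω_k^a = Σ_{ℓ=1}^{k} (−1)^{a+k+ℓ} h_{a+ℓ−k}(x_ℓ,…,x_k) ω_ℓ`, with `h_j = 0` for `j < 0`. -/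
theorem omega_expansion (k a : ℕ) (hk : 1 ≤ k) :
    Omega k a = fun j =>
      if 1 ≤ j ∧ j ≤ k ∧ k ≤ a + j then
        (-1 : MvPolynomial ℕ ℤ) ^ (a + k + j) * hpoly (Finset.Icc j k) (a + j - k)
      else 0 :=
  omega_expansion_general k a
end

section
/- With ω_k^a as defined recursively by ω_k^0 = ω_k, ω_0 = 0 and ω_k^a = ω_{k−1}^{a−1} − x_k ω_k^{a−1}, one has the inversion formula ω_k = Σ_{ℓ=0}^{n−k} e_ℓ(x_{k+1},…,x_n) ω_n^{n−k−ℓ}, where e_ℓ is the ℓ-th elementary symmetric polynomial. -/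
open MvPolynomial

/-- Elementary symmetric polynomial of degree `d` in the variables `x_i`, `i ∈ s`. -/
noncomputable def epoly (s : Finset ℕ) (d : ℕ) : MvPolynomial ℕ ℤ :=
  ∑ t ∈ s.powersetCard d, ∏ i ∈ t, X i

lemma epoly_zero (s : Finset ℕ) : epoly s 0 = 1 := by
  simp [epoly]

lemma epoly_card_lt {s : Finset ℕ} {d : ℕ} (h : s.card < d) : epoly s d = 0 := by
  rw [epoly, Finset.powersetCard_eq_empty.2 h, Finset.sum_empty]

lemma epoly_insert {i : ℕ} {s : Finset ℕ} (h : i ∉ s) (d : ℕ) :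
    epoly (insert i s) (d + 1) = epoly s (d + 1) + X i * epoly s d := by
  classical
  unfold epoly
  rw [Finset.powersetCard_succ_insert h, Finset.sum_union, Finset.sum_image]
  · rw [Finset.mul_sum]
    congr 1
    refine Finset.sum_congr rfl fun t ht => ?_
    have hit : i ∉ t := fun hi => h ((Finset.mem_powersetCard.1 ht).1 hi)
    rw [Finset.prod_insert hit]
  · intro t₁ h₁ t₂ h₂ he
    have h1 : i ∉ t₁ := fun hi => h ((Finset.mem_powersetCard.1 h₁).1 hi)
    have h2 : i ∉ t₂ := fun hi => h ((Finset.mem_powersetCard.1 h₂).1 hi)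
    rw [← Finset.erase_insert h1, ← Finset.erase_insert h2, he]
  · rw [Finset.disjoint_left]
    intro t ht ht'
    obtain ⟨u, hu, rfl⟩ := Finset.mem_image.1 ht'
    exact ((Finset.mem_powersetCard.1 ht).1 (Finset.mem_insert_self i u)) |> fun hi => h hi

lemma omega_step (N a j : ℕ) :
    Omega N a j = Omega (N + 1) (a + 1) j + X (N + 1) * Omega (N + 1) a j := by
  have : Omega (N + 1) (a + 1) j = Omega N a j - X (N + 1) * Omega (N + 1) a j := by
    simp [Omega]
  rw [this]; ring

lemma omega_aux (k m j : ℕ) :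
    Omega k 0 j = ∑ l ∈ Finset.range (m + 1),
      epoly (Finset.Icc (k + 1) (k + m)) l * Omega (k + m) (m - l) j := by
  induction m with
  | zero =>
      have : Finset.Icc (k + 1) k = (∅ : Finset ℕ) := by
        rw [Finset.Icc_eq_empty]; omega
      simp [this, epoly_zero]
  | succ m ih =>
      set s := Finset.Icc (k + 1) (k + m) with hs
      set N := k + m + 1 with hN
      have hIcc : Finset.Icc (k + 1) (k + m + 1) = insert N s :=
        (Finset.insert_Icc_right_eq_Icc_add_one (by omega)).symm
      have hnm : N ∉ s := by simp [hs, hN]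
      have hcard : s.card = m := by rw [hs, Nat.card_Icc]; omega
      rw [ih]
      have hsub : ∀ l ∈ Finset.range (m + 1),
          epoly s l * Omega (k + m) (m - l) j =
          epoly s l * Omega N (m - l + 1) j +
          X N * epoly s l * Omega N (m - l) j := by
        intro l hl
        rw [hN, omega_step (k + m) (m - l) j]
        ring
      rw [Finset.sum_congr rfl hsub, Finset.sum_add_distrib]
      show _ = ∑ l ∈ Finset.range (m + 1 + 1),
        epoly (Finset.Icc (k + 1) (k + (m + 1))) l * Omega (k + (m + 1)) (m + 1 - l) j
      have hrw : k + (m + 1) = k + m + 1 := by omega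
      rw [hrw, hIcc, ← hN]
      have hR : ∑ l ∈ Finset.range (m + 1 + 1),
          epoly (insert N s) l * Omega N (m + 1 - l) j =
          Omega N (m + 1) j + ((∑ l ∈ Finset.range (m + 1), epoly s (l + 1) * Omega N (m - l) j)
            + ∑ l ∈ Finset.range (m + 1), X N * epoly s l * Omega N (m - l) j) := by
        rw [Finset.sum_range_succ' (fun l => epoly (insert N s) l * Omega N (m + 1 - l) j) (m + 1)]
        have h0 : epoly (insert N s) 0 * Omega N (m + 1 - 0) j = Omega N (m + 1) j := by
          rw [epoly_zero, Nat.sub_zero, one_mul]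
        rw [h0, add_comm]
        congr 1
        rw [← Finset.sum_add_distrib]
        refine Finset.sum_congr rfl fun l hl => ?_
        have h1 : m + 1 - (l + 1) = m - l := by omega
        rw [h1, epoly_insert hnm]
        ring
      rw [hR]
      have hL : ∑ l ∈ Finset.range (m + 1), epoly s l * Omega N (m - l + 1) j =
          Omega N (m + 1) j + ∑ l ∈ Finset.range (m + 1), epoly s (l + 1) * Omega N (m - l) j := by
        rw [Finset.sum_range_succ' (fun l => epoly s l * Omega N (m - l + 1) j) m]
        have h0 : epoly s 0 * Omega N (m - 0 + 1) j = Omega N (m + 1) j := by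
          rw [epoly_zero, Nat.sub_zero, one_mul]
        rw [h0, add_comm]
        congr 1
        rw [Finset.sum_range_succ (fun l => epoly s (l + 1) * Omega N (m - l) j) m]
        have hlast : epoly s (m + 1) * Omega N (m - m) j = 0 := by
          rw [epoly_card_lt (by omega), zero_mul]
        rw [hlast, add_zero]
        refine Finset.sum_congr rfl fun l hl => ?_
        have hl' : l < m := Finset.mem_range.1 hl
        have h1 : m - (l + 1) + 1 = m - l := by omega
        rw [h1]
      rw [hL, add_assoc]

/-- Inversion formula: `ω_k = Σ_{ℓ=0}^{n−k} e_ℓ(x_{k+1},…,x_n) ω_n^{n−k−ℓ}`. -/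
theorem omega_inversion (n k : ℕ) (hk : 1 ≤ k) (hkn : k ≤ n) :
    Omega k 0 = ∑ l ∈ Finset.range (n - k + 1),
      (fun j => epoly (Finset.Icc (k + 1) n) l * Omega n (n - k - l) j) := by
  funext j
  rw [Finset.sum_apply]
  have h := omega_aux k (n - k) j
  have hkn' : k + (n - k) = n := by omega
  rw [hkn'] at h
  exact h
end

section
/- ℤ[x_1,…,x_n] is a free module over the subring of symmetric polynomials ℤ[x_1,…,x_n]^{S_n}, with basis the monomials x_1^{a_1}⋯x_n^{a_n} with 0 ≤ a_i ≤ n − i; in particular its rank is n!. -/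
/-!
Induct on `n`, singling out the variable `x₀`. Write `Λₖ` for the symmetric polynomials in `k`
variables and `Λₙ₊₁[x₀]` for the `Λₙ₊₁`-algebra generated by `x₀`. The staircase basis in `n + 1`
variables is the product of two bases along the tower `Λₙ₊₁ ⊆ Λₙ₊₁[x₀] ⊆ ℤ[x₀, …, xₙ]`:

* `1, x₀, …, x₀ⁿ` is a `Λₙ₊₁`-basis of `Λₙ₊₁[x₀]`. It spans because `x₀` is a root of the monic
  polynomial `∏ᵢ (T - xᵢ)`, whose coefficients are symmetric; it is independent because a relation
  `∑ₐ cₐ x₀ᵃ = 0` with symmetric `cₐ` can be moved to every `xᵢ`, and the Vandermonde determinant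
  of `x₀, …, xₙ` is not zero.
* The staircase basis of `ℤ[x₁, …, xₙ]` over `Λₙ` is a `Λₙ₊₁[x₀]`-basis of `ℤ[x₀, …, xₙ]`. Seen
  as polynomials in `x₀`, the elements of `Λₙ₊₁[x₀]` are exactly those with coefficients in
  `Λₙ(x₁, …, xₙ)`: the coefficients of a symmetric polynomial are symmetric in `x₁, …, xₙ`, and
  conversely `Λₙ(x₁, …, xₙ) ⊆ Λₙ₊₁[x₀]` because
  `eⱼ(x₁, …, xₙ) = eⱼ(x₀, …, xₙ) - x₀ eⱼ₋₁(x₁, …, xₙ)`. Both halves of the basis property then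
  reduce to the inductive hypothesis coefficientwise.
-/

open MvPolynomial

noncomputable section

theorem Multiset.esymm_cons_succ {R : Type*} [CommSemiring R] (a : R) (s : Multiset R)
    (k : ℕ) : (a ::ₘ s).esymm (k + 1) = s.esymm (k + 1) + a * s.esymm k := by
  simp [esymm, powersetCard_cons, Multiset.sum_map_mul_left]

theorem Polynomial.aeval_mem_span_pow_of_monic {R S : Type*} [CommRing R] [Nontrivial R]
    [Ring S] [Algebra R S] {x : S} {q : Polynomial R} (hq : q.Monic) (hx : aeval x q = 0)
    (p : Polynomial R) :
    aeval x p ∈ Submodule.span R (Set.range fun i : Fin q.natDegree => x ^ (i : ℕ)) :=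
  PowerBasis.mem_span_pow'.mpr ⟨p %ₘ q, (degree_modByMonic_lt _ hq).trans_le degree_le_natDegree,
    (aeval_modByMonic_eq_self_of_root hx).symm⟩

abbrev Staircase (n : ℕ) := {d : Fin n → ℕ // ∀ i : Fin n, d i + (i : ℕ) < n}

instance : Unique (Staircase 0) where
  default := ⟨finZeroElim, finZeroElim⟩
  uniq _ := Subtype.ext (funext finZeroElim)

def Staircase.consEquiv (n : ℕ) : Fin (n + 1) × Staircase n ≃ Staircase (n + 1) where
  toFun ad := ⟨Fin.cons ad.1 ad.2.1, Fin.cases (by simpa using ad.1.isLt) fun i => by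
    simpa [Nat.succ_le_iff, ← add_assoc] using ad.2.2 i⟩
  invFun d := (⟨d.1 0, by simpa using d.2 0⟩, ⟨Fin.tail d.1, fun i => by
    simpa [Fin.tail, Nat.succ_le_iff, ← add_assoc] using d.2 i.succ⟩)
  left_inv ad := by simp
  right_inv d := Subtype.ext (Fin.cons_self_tail d.1)

theorem Staircase.card : ∀ n, Nat.card (Staircase n) = n.factorial
  | 0 => Nat.card_unique
  | n + 1 => by
    rw [← Nat.card_congr (Staircase.consEquiv n), Nat.card_prod, Staircase.card n, Nat.card_fin,
      Nat.factorial_succ]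

namespace MvPolynomial

variable {σ R : Type*} [CommRing R]

variable (σ R) in
abbrev symmetricAdjoinX (i : σ) :
    Subalgebra (symmetricSubalgebra σ R) (MvPolynomial σ R) :=
  Algebra.adjoin (symmetricSubalgebra σ R) {X i}

theorem isSymmetric_of_subsingleton [Subsingleton σ] (p : MvPolynomial σ R) : p.IsSymmetric :=
  fun e => by rw [Subsingleton.elim e 1, Equiv.Perm.coe_one, rename_id_apply]

section Charpoly

variable (σ R) [Fintype σ]

def symmetricCharpoly : Polynomial (symmetricSubalgebra σ R) :=
  ∑ j ∈ Finset.range (Fintype.card σ + 1),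
    (-1) ^ j * (Polynomial.C ⟨esymm σ R j, esymm_isSymmetric σ R j⟩ *
      Polynomial.X ^ (Fintype.card σ - j))

theorem map_symmetricCharpoly :
    (symmetricCharpoly σ R).map (symmetricSubalgebra σ R).val =
      ((Finset.univ.val.map (X : σ → MvPolynomial σ R)).map
        fun t => Polynomial.X - Polynomial.C t).prod := by
  rw [Multiset.prod_X_sub_X_eq_sum_esymm, symmetricCharpoly, Polynomial.map_sum]
  simp [esymm_eq_multiset_esymm]

theorem symmetricCharpoly_monic : (symmetricCharpoly σ R).Monic :=
  Polynomial.monic_of_injective Subtype.val_injective <| by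
    rw [map_symmetricCharpoly]
    exact Polynomial.monic_multiset_prod_of_monic _ _ fun t _ => Polynomial.monic_X_sub_C t

theorem natDegree_symmetricCharpoly [Nontrivial R] :
    (symmetricCharpoly σ R).natDegree = Fintype.card σ := by
  rw [← (symmetricCharpoly_monic σ R).natDegree_map
      ((symmetricSubalgebra σ R).val : _ →+* MvPolynomial σ R),
    map_symmetricCharpoly, Polynomial.natDegree_multiset_prod_X_sub_C_eq_card]
  simp

variable {σ R}

theorem aeval_X_symmetricCharpoly (i : σ) :
    Polynomial.aeval (X i : MvPolynomial σ R) (symmetricCharpoly σ R) = 0 := by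
  rw [Polynomial.aeval_def, Polynomial.eval₂_eq_eval_map, Subalgebra.algebraMap_eq,
    Algebra.algebraMap_self, RingHom.id_comp, map_symmetricCharpoly,
    Polynomial.eval_multiset_prod, Multiset.map_map, Multiset.map_map]
  exact Multiset.prod_eq_zero (Multiset.mem_map.mpr ⟨i, Finset.mem_univ i, by simp⟩)

theorem mem_span_X_pow_of_mem_symmetricAdjoinX [Nontrivial R] {i : σ} {p : MvPolynomial σ R}
    (hp : p ∈ symmetricAdjoinX σ R i) :
    p ∈ Submodule.span (symmetricSubalgebra σ R)
      (Set.range fun k : Fin (Fintype.card σ) => (X i : MvPolynomial σ R) ^ (k : ℕ)) := by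
  rw [symmetricAdjoinX, Algebra.adjoin_singleton_eq_range_aeval] at hp
  obtain ⟨q, rfl⟩ := hp
  rw [← natDegree_symmetricCharpoly σ R]
  exact Polynomial.aeval_mem_span_pow_of_monic (symmetricCharpoly_monic σ R)
    (aeval_X_symmetricCharpoly i) q

end Charpoly

section Tail

variable {n : ℕ}

theorem finSuccEquiv_rename_succ (q : MvPolynomial (Fin n) R) :
    finSuccEquiv R n (rename Fin.succ q) = Polynomial.C q := by
  have h : (finSuccEquiv R n).toAlgHom.comp (rename Fin.succ) = Polynomial.CAlgHom :=
    algHom_ext fun i => by simp [finSuccEquiv_X_succ]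
  exact DFunLike.congr_fun h q

theorem finSuccEquiv_symm_monomial (k : ℕ) (r : MvPolynomial (Fin n) R) :
    (finSuccEquiv R n).symm (Polynomial.monomial k r) = X 0 ^ k * rename Fin.succ r := by
  rw [AlgEquiv.symm_apply_eq, map_mul, map_pow, finSuccEquiv_X_zero, finSuccEquiv_rename_succ,
    Polynomial.X_pow_mul_C, Polynomial.C_mul_X_pow_eq_monomial]

theorem finSuccEquiv_rename_decomposeFin (e : Equiv.Perm (Fin n))
    (p : MvPolynomial (Fin (n + 1)) R) :
    finSuccEquiv R n (rename (Equiv.Perm.decomposeFin.symm (0, e)) p) =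
      Polynomial.mapAlgHom (rename e) (finSuccEquiv R n p) := by
  have h : (finSuccEquiv R n).toAlgHom.comp (rename (Equiv.Perm.decomposeFin.symm (0, e))) =
      (Polynomial.mapAlgHom (rename e)).comp (finSuccEquiv R n).toAlgHom :=
    algHom_ext fun i => by
      refine Fin.cases ?_ (fun j => ?_) i <;> simp [finSuccEquiv_X_zero, finSuccEquiv_X_succ]
  exact DFunLike.congr_fun h p

theorem finSuccEquiv_mem_lifts_of_mem_symmetricSubalgebra {p : MvPolynomial (Fin (n + 1)) R}
    (hp : p ∈ symmetricSubalgebra (Fin (n + 1)) R) :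
    finSuccEquiv R n p ∈
      Polynomial.lifts (algebraMap (symmetricSubalgebra (Fin n) R) (MvPolynomial (Fin n) R)) := by
  refine (Polynomial.lifts_iff_coeff_lifts _).mpr fun k =>
    ⟨⟨(finSuccEquiv R n p).coeff k, fun e => ?_⟩, rfl⟩
  have h := finSuccEquiv_rename_decomposeFin e p
  rw [hp] at h
  simpa using congrArg (Polynomial.coeff · k) h.symm

theorem finSuccEquiv_mem_lifts_of_mem_symmetricAdjoinX {p : MvPolynomial (Fin (n + 1)) R}
    (hp : p ∈ symmetricAdjoinX (Fin (n + 1)) R 0) :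
    finSuccEquiv R n p ∈
      Polynomial.lifts (algebraMap (symmetricSubalgebra (Fin n) R) (MvPolynomial (Fin n) R)) := by
  induction hp using Algebra.adjoin_induction with
  | mem x hx =>
    rw [Set.mem_singleton_iff.mp hx, finSuccEquiv_X_zero]
    exact Polynomial.X_mem_lifts _
  | algebraMap r => exact finSuccEquiv_mem_lifts_of_mem_symmetricSubalgebra r.2
  | add x y _ _ hx hy => rw [map_add]; exact add_mem hx hy
  | mul x y _ _ hx hy => rw [map_mul]; exact mul_mem hx hy

theorem rename_esymm_succ (j : ℕ) :
    rename Fin.succ (esymm (Fin n) R (j + 1)) =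
      esymm (Fin (n + 1)) R (j + 1) - X 0 * rename Fin.succ (esymm (Fin n) R j) := by
  have h (k : ℕ) : rename Fin.succ (esymm (Fin n) R k) =
      (Finset.univ.val.map fun i : Fin n => (X i.succ : MvPolynomial (Fin (n + 1)) R)).esymm k := by
    rw [← aeval_X_left_apply (rename _ _), aeval_rename, aeval_esymm_eq_multiset_esymm]
    rfl
  rw [h, h, eq_sub_iff_add_eq, esymm_eq_multiset_esymm, Fin.univ_succ, Finset.cons_val,
    Multiset.map_cons, Multiset.esymm_cons_succ, Finset.map_val, Multiset.map_map]
  rfl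

theorem rename_esymm_mem_symmetricAdjoinX (j : ℕ) :
    rename Fin.succ (esymm (Fin n) R j) ∈ symmetricAdjoinX (Fin (n + 1)) R 0 := by
  induction j with
  | zero => simp
  | succ j ih =>
    rw [rename_esymm_succ]
    refine sub_mem ?_ (mul_mem (Algebra.self_mem_adjoin_singleton _ _) ih)
    exact (symmetricAdjoinX (Fin (n + 1)) R 0).algebraMap_mem
      (⟨_, esymm_isSymmetric _ _ (j + 1)⟩ : symmetricSubalgebra (Fin (n + 1)) R)

theorem rename_mem_symmetricAdjoinX {r : MvPolynomial (Fin n) R}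
    (hr : r ∈ symmetricSubalgebra (Fin n) R) :
    rename Fin.succ r ∈ symmetricAdjoinX (Fin (n + 1)) R 0 := by
  obtain ⟨q, hq⟩ := esymmAlgHom_surjective R (Fintype.card_fin n).le ⟨r, hr⟩
  have hr' : aeval (fun i : Fin n => esymm (Fin n) R (i + 1)) q = r :=
    (esymmAlgHom_apply q).symm.trans (congrArg Subtype.val hq)
  rw [← hr', ← AlgHom.comp_apply, comp_aeval]
  set f := fun i : Fin n => rename Fin.succ (esymm (Fin n) R (i + 1))
  have hle : Algebra.adjoin R (Set.range f) ≤
      (symmetricAdjoinX (Fin (n + 1)) R 0).restrictScalars R :=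
    Algebra.adjoin_le (Set.range_subset_iff.mpr fun i => rename_esymm_mem_symmetricAdjoinX _)
  exact hle (Algebra.adjoin_range_eq_range_aeval R f ▸ AlgHom.mem_range_self _ q)

variable {ι : Type*} (b : Module.Basis ι (symmetricSubalgebra (Fin n) R) (MvPolynomial (Fin n) R))

theorem linearIndependent_rename_succ :
    LinearIndependent (symmetricAdjoinX (Fin (n + 1)) R 0) fun i => rename Fin.succ (b i) := by
  refine (linearIndependent_iff' (R := symmetricAdjoinX (Fin (n + 1)) R 0)).mpr
    fun s g hg i hi => ?_
  choose q hq using fun j =>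
    (Polynomial.mem_lifts _).mp (finSuccEquiv_mem_lifts_of_mem_symmetricAdjoinX (g j).2)
  have hq0 (k : ℕ) : ∀ j ∈ s, (q j).coeff k = 0 := by
    refine linearIndependent_iff'.mp b.linearIndependent s _ ?_
    simpa [Subalgebra.smul_def, finSuccEquiv_rename_succ, ← hq, Polynomial.finsetSum_coeff]
      using congrArg (fun P => (finSuccEquiv R n P).coeff k) hg
  have : q i = 0 := Polynomial.ext fun k => hq0 k i hi
  refine Subtype.ext ((finSuccEquiv R n).injective ?_)
  rw [← hq, this, Polynomial.map_zero, ZeroMemClass.coe_zero, map_zero]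

theorem rename_succ_mem_span (r : MvPolynomial (Fin n) R) :
    rename Fin.succ r ∈ Submodule.span (symmetricAdjoinX (Fin (n + 1)) R 0)
      (Set.range fun i => rename Fin.succ (b i)) := by
  induction b.mem_span r using Submodule.span_induction with
  | mem x hx =>
    obtain ⟨i, rfl⟩ := hx
    exact Submodule.subset_span ⟨i, rfl⟩
  | zero => simp
  | add x y _ _ hx hy => rw [map_add]; exact add_mem hx hy
  | smul c x _ hx =>
    have h := Submodule.smul_mem _ (⟨rename Fin.succ (c : MvPolynomial (Fin n) R),
      rename_mem_symmetricAdjoinX c.2⟩ : symmetricAdjoinX (Fin (n + 1)) R 0) hx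
    rwa [Subalgebra.smul_def, smul_eq_mul, ← map_mul, ← smul_eq_mul, ← Subalgebra.smul_def] at h

theorem span_rename_succ_eq_top :
    Submodule.span (symmetricAdjoinX (Fin (n + 1)) R 0)
      (Set.range fun i => rename Fin.succ (b i)) = ⊤ := by
  refine Submodule.eq_top_iff'.mpr fun p => ?_
  rw [← (finSuccEquiv R n).symm_apply_apply p]
  induction finSuccEquiv R n p using Polynomial.induction_on' with
  | add P Q hP hQ => rw [map_add]; exact add_mem hP hQ
  | monomial k r =>
    have h := Submodule.smul_mem _ (⟨X 0 ^ k, pow_mem (Algebra.self_mem_adjoin_singleton _ _) k⟩ :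
      symmetricAdjoinX (Fin (n + 1)) R 0) (rename_succ_mem_span b r)
    rwa [Subalgebra.smul_def, smul_eq_mul, ← finSuccEquiv_symm_monomial] at h

def renameSuccBasis :
    Module.Basis ι (symmetricAdjoinX (Fin (n + 1)) R 0) (MvPolynomial (Fin (n + 1)) R) :=
  .mk (linearIndependent_rename_succ b) (span_rename_succ_eq_top b).ge

theorem renameSuccBasis_apply (i : ι) : renameSuccBasis b i = rename Fin.succ (b i) := by
  simp [renameSuccBasis]

end Tail

def staircaseBasisZero :
    Module.Basis (Staircase 0) (symmetricSubalgebra (Fin 0) R) (MvPolynomial (Fin 0) R) :=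
  (Module.Basis.singleton _ _).map <| LinearEquiv.ofBijective (Algebra.linearMap _ _)
    ⟨Subtype.val_injective, fun p => ⟨⟨p, isSymmetric_of_subsingleton p⟩, rfl⟩⟩

section Domain

variable [IsDomain R] {m : ℕ}

theorem linearIndependent_X_pow (i : Fin m) :
    LinearIndependent (symmetricSubalgebra (Fin m) R)
      fun k : Fin m => (X i : MvPolynomial (Fin m) R) ^ (k : ℕ) := by
  refine Fintype.linearIndependent_iff.mpr fun c hc a => ?_
  -- the transposition `(i j)` fixes the coefficients and moves the relation from `xᵢ` to `xⱼ`
  have hc' (j : Fin m) : ∑ k : Fin m, (X j : MvPolynomial (Fin m) R) ^ (k : ℕ) * c k = 0 := by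
    have := congrArg (rename (Equiv.swap i j)) hc
    rw [map_sum, map_zero] at this
    convert! this using 2 with k
    rw [Subalgebra.smul_def, smul_eq_mul, map_mul, map_pow, rename_X, Equiv.swap_apply_left,
      (c k).2 (Equiv.swap i j), mul_comm]
  have hV : (Matrix.vandermonde fun j => (X j : MvPolynomial (Fin m) R)).mulVec
      (fun k => c k) = 0 :=
    _root_.funext hc'
  have hdet := Matrix.det_vandermonde_ne_zero_iff.mpr (X_injective (σ := Fin m) (R := R))
  exact Subtype.ext (congrFun (Matrix.eq_zero_of_mulVec_eq_zero hdet hV) a)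

-- the search for the `symmetricSubalgebra`-module structure on `symmetricAdjoinX` is slow
set_option synthInstance.maxHeartbeats 100000 in
def symmetricAdjoinXBasis (i : Fin m) :
    Module.Basis (Fin m) (symmetricSubalgebra (Fin m) R) (symmetricAdjoinX (Fin m) R i) :=
  .mk (v := fun k => ⟨X i ^ (k : ℕ), pow_mem (Algebra.self_mem_adjoin_singleton _ _) _⟩)
    (.of_comp (Subalgebra.val _).toLinearMap (linearIndependent_X_pow i)) fun t _ => by
      obtain ⟨c, hc⟩ := (Submodule.mem_span_range_iff_exists_fun _).mp
        (Fintype.card_fin m ▸ mem_span_X_pow_of_mem_symmetricAdjoinX t.2)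
      exact (Submodule.mem_span_range_iff_exists_fun _).mpr ⟨c, Subtype.ext (by simpa using hc)⟩

theorem symmetricAdjoinXBasis_apply (i k : Fin m) :
    (symmetricAdjoinXBasis (R := R) i k : MvPolynomial (Fin m) R) = X i ^ (k : ℕ) := by
  simp [symmetricAdjoinXBasis]

set_option synthInstance.maxHeartbeats 100000 in
def staircaseBasis :
    (n : ℕ) → Module.Basis (Staircase n) (symmetricSubalgebra (Fin n) R) (MvPolynomial (Fin n) R)
  | 0 => staircaseBasisZero
  | n + 1 => ((symmetricAdjoinXBasis 0).smulTower (renameSuccBasis (staircaseBasis n))).reindex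
      (Staircase.consEquiv n)

set_option synthInstance.maxHeartbeats 100000 in
theorem staircaseBasis_apply : ∀ (n : ℕ) (d : Staircase n),
    staircaseBasis (R := R) n d = ∏ i, X i ^ d.1 i
  | 0, d => by simp [staircaseBasis, staircaseBasisZero]; rfl
  | n + 1, d => by
    rw [staircaseBasis, Module.Basis.reindex_apply, Module.Basis.smulTower_apply,
      Subalgebra.smul_def, smul_eq_mul, symmetricAdjoinXBasis_apply, renameSuccBasis_apply,
      staircaseBasis_apply n, map_prod, Fin.prod_univ_succ]
    simp [Staircase.consEquiv, Fin.tail]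

end Domain

end MvPolynomial

end

/-- `ℤ[x_1,…,x_n]` is a free module over the subring of symmetric polynomials, with basis
the monomials `x_1^{a_1}⋯x_n^{a_n}` with `0 ≤ a_i ≤ n − i` (0-based: `a_i + i < n`);
in particular its rank is `n!`. -/
theorem polynomial_free_over_symmetric (n : ℕ) :
    (∃ B : Module.Basis {d : Fin n → ℕ // ∀ i : Fin n, d i + (i : ℕ) < n}
        (symmetricSubalgebra (Fin n) ℤ) (MvPolynomial (Fin n) ℤ),
      ∀ d, B d = ∏ i : Fin n, X i ^ (d.1 i)) ∧
    Nat.card {d : Fin n → ℕ // ∀ i : Fin n, d i + (i : ℕ) < n} = n.factorial :=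
  ⟨⟨staircaseBasis n, staircaseBasis_apply n⟩, Staircase.card n⟩
end

section
/- In the superalgebra A_n (nilHecke algebra extended by odd generators ω_1,…,ω_n with x_iω_j = ω_jx_i, T_iω_j = ω_jT_i for i ≠ j, and T_i(ω_i − x_{i+1}ω_{i+1}) = (ω_i − x_{i+1}ω_{i+1})T_i), the relation T_1 ω_1 T_1 ω_1 = −ω_1 T_1 ω_1 T_1 holds. -/
/-- In the superalgebra `A_n` (any ring with even elements `x_1,…,x_n`, `T_1,…,T_{n−1}`
satisfying the nilHecke relations, odd anticommuting square-zero elements `ω_1,…,ω_n`, and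
the mixed relations `x_iω_j = ω_jx_i`, `T_iω_j = ω_jT_i` for `i ≠ j`,
`T_i(ω_i − x_{i+1}ω_{i+1}) = (ω_i − x_{i+1}ω_{i+1})T_i`; 1-based indexing), the relation
`T_1 ω_1 T_1 ω_1 = −ω_1 T_1 ω_1 T_1` holds. -/
theorem T1_omega1_anticommute
    (n : ℕ) (hn : 2 ≤ n) (A : Type*) [Ring A] (T x ω : ℕ → A)
    (hT2 : ∀ i, 1 ≤ i → i + 1 ≤ n → T i * T i = 0)
    (hTT : ∀ i j, 1 ≤ i → j + 1 ≤ n → i + 1 < j → T i * T j = T j * T i)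
    (hbraid : ∀ i, 1 ≤ i → i + 2 ≤ n → T i * T (i + 1) * T i = T (i + 1) * T i * T (i + 1))
    (hxx : ∀ i j, x i * x j = x j * x i)
    (hTx : ∀ i j, 1 ≤ i → i + 1 ≤ n → j ≠ i → j ≠ i + 1 → T i * x j = x j * T i)
    (hTxi : ∀ i, 1 ≤ i → i + 1 ≤ n → T i * x i - x (i + 1) * T i = 1)
    (hTxi1 : ∀ i, 1 ≤ i → i + 1 ≤ n → T i * x (i + 1) - x i * T i = -1)
    (hanti : ∀ i j, 1 ≤ i → i ≤ n → 1 ≤ j → j ≤ n → ω i * ω j = -(ω j * ω i))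
    (hsq : ∀ i, 1 ≤ i → i ≤ n → ω i * ω i = 0)
    (hxω : ∀ i j, x i * ω j = ω j * x i)
    (hTω : ∀ i j, 1 ≤ i → i + 1 ≤ n → 1 ≤ j → j ≤ n → i ≠ j → T i * ω j = ω j * T i)
    (hTωmix : ∀ i, 1 ≤ i → i + 1 ≤ n →
      T i * (ω i - x (i + 1) * ω (i + 1)) = (ω i - x (i + 1) * ω (i + 1)) * T i) :
    T 1 * ω 1 * T 1 * ω 1 = -(ω 1 * T 1 * ω 1 * T 1) := by
  set t := T 1 with ht
  set a := ω 1 with ha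
  set b := ω 2 with hb
  set p := x 1 with hp
  set q := x 2 with hq
  have htt : t * t = 0 := hT2 1 le_rfl hn
  have haa : a * a = 0 := hsq 1 le_rfl (by omega)
  have hbb : b * b = 0 := hsq 2 (by omega) hn
  have htb : t * b = b * t := hTω 1 2 le_rfl hn (by omega) hn (by omega)
  have hpa : p * a = a * p := hxω 1 1
  have hqa : q * a = a * q := hxω 2 1
  have htp : t * p = q * t + 1 := by
    have h := hTxi 1 le_rfl hn
    norm_num at h
    rw [sub_eq_iff_eq_add] at h
    show T 1 * x 1 = x 2 * T 1 + 1
    rw [h, add_comm]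
  have htq : t * q = p * t - 1 := by
    have h := hTxi1 1 le_rfl hn
    norm_num at h
    rw [sub_eq_iff_eq_add] at h
    show T 1 * x 2 = x 1 * T 1 - 1
    rw [h, add_comm, ← sub_eq_add_neg]
  have hmix : t * (a - q * b) = (a - q * b) * t := by
    have h := hTωmix 1 le_rfl hn
    norm_num at h
    exact h
  -- key rewriting of t * a
  have hta : t * a = a * t + p * (b * t) - q * (b * t) - b := by
    have cert : t * a - (a * t + p * (b * t) - q * (b * t) - b)
        = (t * (a - q * b) - (a - q * b) * t) + (t * q - (p * t - 1)) * b
          + p * (t * b - b * t) := by noncomm_ring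
    rw [hmix, htq, htb] at cert
    simp only [sub_self, zero_mul, mul_zero, add_zero, zero_add] at cert
    exact sub_eq_zero.mp cert
  -- t commutes with a*b
  have hTab : t * (a * b) = a * b * t := by
    have cert : t * (a * b) - a * b * t
        = (t * a - (a * t + p * (b * t) - q * (b * t) - b)) * b
          + a * (t * b - b * t) + p * (b * (t * b - b * t)) + p * (b * b * t)
          - q * (b * (t * b - b * t)) - q * (b * b * t) - b * b := by noncomm_ring
    rw [hta, htb, hbb] at cert
    simp only [sub_self, zero_mul, mul_zero, add_zero, zero_add, sub_zero] at cert
    exact sub_eq_zero.mp cert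
  -- step 2 : (ta)(ta) = a b t
  have h2 : (t * a) * (t * a) = a * b * t := by
    have cert : (t * a) * (t * a) - a * b * t
        = (t * a) * (t * a - (a * t + p * (b * t) - q * (b * t) - b))
          + t * ((a * a) * t)
          + (t * p - (q * t + 1)) * (a * b * t)
          + q * ((t * (a * b) - a * b * t) * t)
          + (q * (a * b)) * (t * t)
          - t * ((p * a - a * p) * (b * t))
          - (t * q - (p * t - 1)) * (a * b * t)
          - p * ((t * (a * b) - a * b * t) * t)
          - (p * (a * b)) * (t * t)
          + t * ((q * a - a * q) * (b * t))
          - (t * (a * b) - a * b * t) := by noncomm_ring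
    rw [hta, haa, htp, htq, hpa, hqa, hTab, htt] at cert
    simp only [sub_self, zero_mul, mul_zero, add_zero, zero_add, sub_zero] at cert
    rw [sub_eq_zero] at cert
    rw [hta]
    exact cert
  -- step 3 : a (ta) t = -(a b t)
  have h3 : a * (t * a) * t = -(a * b * t) := by
    have cert : a * (t * a) * t - -(a * b * t)
        = a * ((t * a - (a * t + p * (b * t) - q * (b * t) - b)) * t)
          + (a * a) * (t * t) + (a * (p * b)) * (t * t)
          - (a * (q * b)) * (t * t) := by noncomm_ring
    rw [hta, haa, htt] at cert
    simp only [sub_self, zero_mul, mul_zero, add_zero, zero_add, sub_zero] at cert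
    rw [sub_eq_zero] at cert
    rw [hta]
    exact cert
  calc t * a * t * a = (t * a) * (t * a) := by noncomm_ring
    _ = a * b * t := h2
    _ = -(-(a * b * t)) := by noncomm_ring
    _ = -(a * (t * a) * t) := by rw [h3]
    _ = -(a * t * a * t) := by noncomm_ring
end
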